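/- Let Φ(β, λ) = f(β) + g(β, λ) where, for each λ in a neighborhood Λ, f is convex C² and g(·,λ) is proper closed convex, and assume at any minimizer β̂^{(λ)} with generalized support Ŝ that ∇²_{Ŝ,Ŝ} f(β̂^{(λ)}) ≻ 0 and the non-degeneracy condition −∇f(β̂^{(λ)}) ∈ ri(∂_β g(β̂^{(λ)}, λ)) holds. Then for every λ ∈ Λ the minimizer of Φ(·, λ) is unique, so the map λ ↦ β̂^{(λ)} is well-defined on Λ. -/

import Mathlib

/-!
Let `β₁ ≠ β₂` be two minimizers and `D = β₁ - β₂`. Adding the convexity inequalities of `f` and of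
the `gⱼ` along the segment `[β₂, β₁]` yields an equality, so `f` and every `gⱼ` are affine on it and
the midpoint `m` is again a minimizer. Affinity of `f` gives `⟪D, ∇²f(m) D⟫ = 0`. Affinity of `gⱼ`
pins down every subgradient `u ∈ ∂gⱼ(mⱼ)` through `u Dⱼ = gⱼ(β₁ⱼ) - gⱼ(β₂ⱼ)`, so whenever `Dⱼ ≠ 0`
the subdifferential (nonempty by non-degeneracy) is a singleton: `D` is supported on the generalized
support at `m`, contradicting positive definiteness of the restricted Hessian.
-/

open Set Filter Topology RealInnerProductSpace

namespace EReal

lemma coe_finset_sum {α : Type*} (s : Finset α) (a : α → ℝ) :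
    ((∑ i ∈ s, a i : ℝ) : EReal) = ∑ i ∈ s, (a i : EReal) :=
  map_sum (⟨⟨Real.toEReal, coe_zero⟩, coe_add⟩ : ℝ →+ EReal) a s

lemma finset_sum_eq_top {α : Type*} [DecidableEq α] {s : Finset α} {F : α → EReal}
    (hbot : ∀ i ∈ s, F i ≠ ⊥) {i : α} (hi : i ∈ s) (htop : F i = ⊤) : ∑ k ∈ s, F k = ⊤ := by
  rw [← Finset.add_sum_erase s F hi, htop, top_add_of_ne_bot]
  exact Finset.sum_induction F (· ≠ ⊥) (fun _ _ ha hb => add_ne_bot_iff.2 ⟨ha, hb⟩)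
    (coe_ne_bot 0) fun k hk => hbot k (Finset.mem_of_mem_erase hk)

end EReal

def subdiff (φ : ℝ → EReal) (x : ℝ) : Set ℝ :=
  {u | ∀ z, ((u * (z - x) : ℝ) : EReal) + φ x ≤ φ z}

lemma mul_sub_eq_of_mem_subdiff {φ : ℝ → EReal} {a b A B θ u : ℝ} (hθ₀ : 0 < θ) (hθ₁ : θ < 1)
    (ha : φ a = A) (hb : φ b = B) (hθ : φ (b + θ * (a - b)) = ((B + θ * (A - B) : ℝ) : EReal))
    (hu : u ∈ subdiff φ (b + θ * (a - b))) : u * (a - b) = A - B := by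
  have hua := hu a
  have hub := hu b
  rw [ha, hθ, ← EReal.coe_add, EReal.coe_le_coe_iff] at hua
  rw [hb, hθ, ← EReal.coe_add, EReal.coe_le_coe_iff] at hub
  nlinarith

lemma exists_subdiff_eq_singleton {φ : ℝ → EReal} {a b A B θ : ℝ} (hθ₀ : 0 < θ) (hθ₁ : θ < 1)
    (hab : a ≠ b) (ha : φ a = A) (hb : φ b = B)
    (hθ : φ (b + θ * (a - b)) = ((B + θ * (A - B) : ℝ) : EReal))
    (hne : (subdiff φ (b + θ * (a - b))).Nonempty) :
    ∃ u, subdiff φ (b + θ * (a - b)) = {u} := by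
  refine ⟨(A - B) / (a - b), hne.subset_singleton_iff.1 fun u hu => ?_⟩
  rw [mem_singleton_iff, eq_div_iff (sub_ne_zero.2 hab)]
  exact mul_sub_eq_of_mem_subdiff hθ₀ hθ₁ ha hb hθ hu

lemma hasDerivAt_add_smul {E : Type*} [NormedAddCommGroup E] [NormedSpace ℝ E] (x v : E) (t : ℝ) :
    HasDerivAt (fun s : ℝ => x + s • v) v t := by
  simpa using ((hasDerivAt_id t).smul_const v).const_add x

section Hessian

variable {E : Type*} [NormedAddCommGroup E] [InnerProductSpace ℝ E] [CompleteSpace E]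
  {f : E → ℝ} {f' : E → E} {x v : E}

lemma HasGradientAt.hasDerivAt_line {t : ℝ} (hf : HasGradientAt f (f' (x + t • v)) (x + t • v)) :
    HasDerivAt (fun s : ℝ => f (x + s • v)) ⟪f' (x + t • v), v⟫ t := by
  simpa [Function.comp_def] using
    (hasGradientAt_iff_hasFDerivAt.1 hf).comp_hasDerivAt t (hasDerivAt_add_smul x v t)

lemma eventually_inner_gradient_eq {t₀ a c : ℝ} (hf' : ∀ y, HasGradientAt f (f' y) y)
    (haff : ∀ᶠ t in 𝓝 t₀, f (x + t • v) = a + t * c) :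
    ∀ᶠ t in 𝓝 t₀, ⟪f' (x + t • v), v⟫ = c := by
  filter_upwards [haff.eventually_nhds] with t ht
  have hlin : HasDerivAt (fun s : ℝ => a + s * c) c t := by
    simpa using (hasDerivAt_mul_const c).const_add a
  exact (hf' _).hasDerivAt_line.unique (hlin.congr_of_eventuallyEq ht)

theorem inner_hessian_eq_zero_of_eventually_affine {H : E →L[ℝ] E} {t₀ a c : ℝ}
    (hf' : ∀ y, HasGradientAt f (f' y) y) (hH : HasFDerivAt f' H (x + t₀ • v))
    (haff : ∀ᶠ t in 𝓝 t₀, f (x + t • v) = a + t * c) : ⟪v, H v⟫ = 0 := by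
  have hderiv : HasDerivAt (fun t => ⟪f' (x + t • v), v⟫) ⟪H v, v⟫ t₀ := by
    simpa using
      (hH.comp_hasDerivAt t₀ (hasDerivAt_add_smul x v t₀)).inner ℝ (hasDerivAt_const t₀ v)
  rw [real_inner_comm]
  exact hderiv.unique <| (hasDerivAt_const t₀ c).congr_of_eventuallyEq
    (eventually_inner_gradient_eq hf' haff)

end Hessian

section Penalized

variable {ι : Type*} [Fintype ι] {f : EuclideanSpace ℝ ι → ℝ} {g : ι → ℝ → EReal}
  {β β₁ β₂ : EuclideanSpace ℝ ι}

def IsPenalizedMin (f : EuclideanSpace ℝ ι → ℝ) (g : ι → ℝ → EReal) (β : EuclideanSpace ℝ ι) :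
    Prop :=
  ∀ β', (f β : EReal) + ∑ j, g j (β j) ≤ (f β' : EReal) + ∑ j, g j (β' j)

lemma penalized_eq_coe {G : ι → ℝ} (hG : ∀ j, g j (β j) = G j) :
    (f β : EReal) + ∑ j, g j (β j) = ((f β + ∑ j, G j : ℝ) : EReal) := by
  simp only [hG, EReal.coe_add, EReal.coe_finset_sum]

lemma IsPenalizedMin.exists_penalty_eq_coe (hβ : IsPenalizedMin f g β)
    (hbot : ∀ j x, g j x ≠ ⊥) (hproper : ∀ j, ∃ x, g j x ≠ ⊤) :
    ∃ G : ι → ℝ, ∀ j, g j (β j) = G j := by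
  classical
  choose x hx using hproper
  refine ⟨fun j => (g j (β j)).toReal, fun j => (EReal.coe_toReal ?_ (hbot _ _)).symm⟩
  intro htop
  have hβx := hβ (WithLp.toLp 2 x)
  rw [EReal.finset_sum_eq_top (fun k _ => hbot k _) (Finset.mem_univ j) htop,
    EReal.coe_add_top, penalized_eq_coe fun k => (EReal.coe_toReal (hx k) (hbot k _)).symm]
    at hβx
  exact (EReal.coe_lt_top _).not_ge hβx

/-- The convexity inequalities for `f` and the `gⱼ` along the segment add up to an equality,
because both endpoints are minimizers. -/
theorem IsPenalizedMin.affine_on_segment (h₁ : IsPenalizedMin f g β₁)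
    (h₂ : IsPenalizedMin f g β₂) (hf : ConvexOn ℝ univ f)
    (hg : ∀ j, ∀ x y θ : ℝ, 0 ≤ θ → θ ≤ 1 →
      g j (θ * x + (1 - θ) * y) ≤ (θ : EReal) * g j x + ((1 - θ : ℝ) : EReal) * g j y)
    (hbot : ∀ j x, g j x ≠ ⊥) {G₁ G₂ : ι → ℝ} (hG₁ : ∀ j, g j (β₁ j) = G₁ j)
    (hG₂ : ∀ j, g j (β₂ j) = G₂ j) {s : ℝ} (hs : s ∈ Icc 0 1) :
    IsPenalizedMin f g (β₂ + s • (β₁ - β₂)) ∧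
      f (β₂ + s • (β₁ - β₂)) = f β₂ + s * (f β₁ - f β₂) ∧
      ∀ j, g j (β₂ j + s * (β₁ j - β₂ j)) = ((G₂ j + s * (G₁ j - G₂ j) : ℝ) : EReal) := by
  set x := β₂ + s • (β₁ - β₂)
  have hxj : ∀ j, x j = β₂ j + s * (β₁ j - β₂ j) := fun j => by simp [x]
  have hfx : f x ≤ f β₂ + s * (f β₁ - f β₂) := by
    have := hf.2 (mem_univ β₁) (mem_univ β₂) hs.1 (sub_nonneg.2 hs.2) (add_sub_cancel s 1)
    rw [show s • β₁ + (1 - s) • β₂ = x by module, smul_eq_mul, smul_eq_mul] at this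
    linarith
  have hgx : ∀ j, g j (x j) ≤ ((G₂ j + s * (G₁ j - G₂ j) : ℝ) : EReal) := fun j => by
    have := hg j (β₁ j) (β₂ j) s hs.1 hs.2
    rw [hG₁, hG₂, ← EReal.coe_mul, ← EReal.coe_mul, ← EReal.coe_add] at this
    rw [hxj]
    convert this using 2 <;> ring
  set Gx : ι → ℝ := fun j => (g j (x j)).toReal
  have hGx : ∀ j, g j (x j) = Gx j := fun j =>
    (EReal.coe_toReal ((hgx j).trans_lt (EReal.coe_lt_top _)).ne (hbot _ _)).symm
  have h₁₂ := h₁ β₂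
  have h₂₁ := h₂ β₁
  have h₂x := h₂ x
  rw [penalized_eq_coe hG₁, penalized_eq_coe hG₂, EReal.coe_le_coe_iff] at h₁₂ h₂₁
  rw [penalized_eq_coe hG₂, penalized_eq_coe hGx, EReal.coe_le_coe_iff] at h₂x
  have hGx_le : ∀ j ∈ Finset.univ, Gx j ≤ G₂ j + s * (G₁ j - G₂ j) := fun j _ => by
    rw [← EReal.coe_le_coe_iff, ← hGx]; exact hgx j
  have hsum : ∑ j, (G₂ j + s * (G₁ j - G₂ j)) = ∑ j, G₂ j - s * (f β₁ - f β₂) := by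
    rw [Finset.sum_add_distrib, ← Finset.mul_sum, Finset.sum_sub_distrib,
      show ∑ j, G₁ j - ∑ j, G₂ j = -(f β₁ - f β₂) by linarith]
    ring
  have hsum_le := Finset.sum_le_sum hGx_le
  have hfx_eq : f x = f β₂ + s * (f β₁ - f β₂) := by linarith
  have hGx_eq := (Finset.sum_eq_sum_iff_of_le hGx_le).1 (by linarith)
  refine ⟨fun β' => ?_, hfx_eq, fun j => ?_⟩
  · calc (f x : EReal) + ∑ j, g j (x j) = (f β₂ : EReal) + ∑ j, g j (β₂ j) := by
          rw [penalized_eq_coe hGx, penalized_eq_coe hG₂, EReal.coe_eq_coe_iff]; linarith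
      _ ≤ _ := h₂ β'
  · rw [← hxj, hGx, hGx_eq j (Finset.mem_univ j)]

end Penalized

theorem stmt_11_general (p r : ℕ)
    (f : EuclideanSpace ℝ (Fin p) → ℝ)
    (hconv : ConvexOn ℝ Set.univ f)
    (f' : EuclideanSpace ℝ (Fin p) → EuclideanSpace ℝ (Fin p))
    (hf' : ∀ x, HasGradientAt f (f' x) x)
    (H : EuclideanSpace ℝ (Fin p) →
      EuclideanSpace ℝ (Fin p) →L[ℝ] EuclideanSpace ℝ (Fin p))
    (hH : ∀ x, HasFDerivAt f' (H x) x)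
    (Λ : Set (EuclideanSpace ℝ (Fin r)))
    (g : Fin p → ℝ → EuclideanSpace ℝ (Fin r) → EReal)
    (hg_bot : ∀ j x lam, g j x lam ≠ ⊥)
    (hg_proper : ∀ j lam, ∃ x, g j x lam ≠ ⊤)
    (hg_convex : ∀ j lam, ∀ x y θ : ℝ, 0 ≤ θ → θ ≤ 1 →
      g j (θ * x + (1 - θ) * y) lam ≤
        (θ : EReal) * g j x lam + ((1 - θ : ℝ) : EReal) * g j y lam)
    -- existence of a minimizer for each `λ ∈ Λ`
    (hexists : ∀ lam ∈ Λ, ∃ β : EuclideanSpace ℝ (Fin p), ∀ β',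
      ((f β : ℝ) : EReal) + ∑ j, g j (β j) lam ≤
        ((f β' : ℝ) : EReal) + ∑ j, g j (β' j) lam)
    -- restricted injectivity: `∇²_{Ŝ,Ŝ} f(β̂) ≻ 0` at every minimizer
    (hPD : ∀ lam ∈ Λ, ∀ β : EuclideanSpace ℝ (Fin p),
      (∀ β', ((f β : ℝ) : EReal) + ∑ j, g j (β j) lam ≤
        ((f β' : ℝ) : EReal) + ∑ j, g j (β' j) lam) →
      ∀ x : EuclideanSpace ℝ (Fin p), x ≠ 0 →
        (∀ j, j ∉ {j : Fin p | ∃ u : ℝ,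
            {u' : ℝ | ∀ z : ℝ, ((u' * (z - β j) : ℝ) : EReal) + g j (β j) lam ≤ g j z lam}
              = {u}} → x j = 0) →
        0 < @inner ℝ _ _ x (H β x))
    -- non-degeneracy: `-∇f(β̂) ∈ ri(∂_β g(β̂, λ))` at every minimizer
    (hND : ∀ lam ∈ Λ, ∀ β : EuclideanSpace ℝ (Fin p),
      (∀ β', ((f β : ℝ) : EReal) + ∑ j, g j (β j) lam ≤
        ((f β' : ℝ) : EReal) + ∑ j, g j (β' j) lam) →
      (fun j => -(f' β j)) ∈ intrinsicInterior ℝ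
        (Set.univ.pi (fun j : Fin p =>
          {u : ℝ | ∀ z : ℝ, ((u * (z - β j) : ℝ) : EReal) + g j (β j) lam ≤ g j z lam}))) :
    ∀ lam ∈ Λ, ∃! β : EuclideanSpace ℝ (Fin p), ∀ β',
      ((f β : ℝ) : EReal) + ∑ j, g j (β j) lam ≤
        ((f β' : ℝ) : EReal) + ∑ j, g j (β' j) lam := by
  intro lam hlam
  obtain ⟨β₂, h₂ : IsPenalizedMin f (g · · lam) β₂⟩ := hexists lam hlam
  refine ⟨β₂, h₂, fun β₁ (h₁ : IsPenalizedMin f (g · · lam) β₁) => ?_⟩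
  by_contra hne
  obtain ⟨G₁, hG₁⟩ := h₁.exists_penalty_eq_coe (hg_bot · · lam) (hg_proper · lam)
  obtain ⟨G₂, hG₂⟩ := h₂.exists_penalty_eq_coe (hg_bot · · lam) (hg_proper · lam)
  have hseg := fun s (hs : s ∈ Icc (0 : ℝ) 1) =>
    h₁.affine_on_segment h₂ hconv (hg_convex · lam) (hg_bot · · lam) hG₁ hG₂ hs
  obtain ⟨hm, -, hgm⟩ := hseg (1 / 2) ⟨by norm_num, by norm_num⟩
  set m := β₂ + (1 / 2 : ℝ) • (β₁ - β₂)
  have hHess : ⟪β₁ - β₂, H m (β₁ - β₂)⟫ = 0 :=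
    inner_hessian_eq_zero_of_eventually_affine hf' (hH m) <|
      eventually_of_mem (Icc_mem_nhds (by norm_num : (0 : ℝ) < 1 / 2) (by norm_num))
        fun s hs => (hseg s hs).2.1
  have hsupp : ∀ j, (¬∃ u, subdiff (g j · lam) (m j) = {u}) → (β₁ - β₂) j = 0 := by
    intro j hj
    by_contra hD
    have hmj : m j = β₂ j + 1 / 2 * (β₁ j - β₂ j) := by simp [m]
    have hnonempty : (subdiff (g j · lam) (m j)).Nonempty :=
      ⟨_, intrinsicInterior_subset (hND lam hlam m hm) j (mem_univ j)⟩
    rw [hmj] at hnonempty hj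
    exact hj <| exists_subdiff_eq_singleton (by norm_num) (by norm_num)
      (sub_ne_zero.1 (by simpa using hD)) (hG₁ j) (hG₂ j) (hgm j) hnonempty
  exact (hPD lam hlam m hm _ (sub_ne_zero.2 hne) hsupp).ne' hHess

/-- Uniqueness of the inner minimizer under restricted injectivity and
non-degeneracy (Liang–Fadili–Peyré, Prop 4.1): for a separable non-smooth
penalty `g(β, λ) = Σⱼ gⱼ(βⱼ, λ)` and smooth convex `f`, if at every minimizer
the Hessian of `f` restricted to the generalized support is positive definite
and `-∇f(β̂) ∈ ri ∂g(β̂, λ)`, then for every `λ ∈ Λ` the minimizer is unique. -/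
theorem stmt_11 (p r : ℕ)
    (f : EuclideanSpace ℝ (Fin p) → ℝ)
    (hf : ContDiff ℝ 2 f) (hconv : ConvexOn ℝ Set.univ f)
    (f' : EuclideanSpace ℝ (Fin p) → EuclideanSpace ℝ (Fin p))
    (hf' : ∀ x, HasGradientAt f (f' x) x)
    (H : EuclideanSpace ℝ (Fin p) →
      EuclideanSpace ℝ (Fin p) →L[ℝ] EuclideanSpace ℝ (Fin p))
    (hH : ∀ x, HasFDerivAt f' (H x) x)
    (Λ : Set (EuclideanSpace ℝ (Fin r)))
    (g : Fin p → ℝ → EuclideanSpace ℝ (Fin r) → EReal)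
    (hg_bot : ∀ j x lam, g j x lam ≠ ⊥)
    (hg_proper : ∀ j lam, ∃ x, g j x lam ≠ ⊤)
    (hg_closed : ∀ j lam, LowerSemicontinuous (fun x => g j x lam))
    (hg_convex : ∀ j lam, ∀ x y θ : ℝ, 0 ≤ θ → θ ≤ 1 →
      g j (θ * x + (1 - θ) * y) lam ≤
        (θ : EReal) * g j x lam + ((1 - θ : ℝ) : EReal) * g j y lam)
    -- existence of a minimizer for each `λ ∈ Λ`
    (hexists : ∀ lam ∈ Λ, ∃ β : EuclideanSpace ℝ (Fin p), ∀ β',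
      ((f β : ℝ) : EReal) + ∑ j, g j (β j) lam ≤
        ((f β' : ℝ) : EReal) + ∑ j, g j (β' j) lam)
    -- restricted injectivity: `∇²_{Ŝ,Ŝ} f(β̂) ≻ 0` at every minimizer
    (hPD : ∀ lam ∈ Λ, ∀ β : EuclideanSpace ℝ (Fin p),
      (∀ β', ((f β : ℝ) : EReal) + ∑ j, g j (β j) lam ≤
        ((f β' : ℝ) : EReal) + ∑ j, g j (β' j) lam) →
      ∀ x : EuclideanSpace ℝ (Fin p), x ≠ 0 →
        (∀ j, j ∉ {j : Fin p | ∃ u : ℝ,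
            {u' : ℝ | ∀ z : ℝ, ((u' * (z - β j) : ℝ) : EReal) + g j (β j) lam ≤ g j z lam}
              = {u}} → x j = 0) →
        0 < @inner ℝ _ _ x (H β x))
    -- non-degeneracy: `-∇f(β̂) ∈ ri(∂_β g(β̂, λ))` at every minimizer
    (hND : ∀ lam ∈ Λ, ∀ β : EuclideanSpace ℝ (Fin p),
      (∀ β', ((f β : ℝ) : EReal) + ∑ j, g j (β j) lam ≤
        ((f β' : ℝ) : EReal) + ∑ j, g j (β' j) lam) →
      (fun j => -(f' β j)) ∈ intrinsicInterior ℝ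
        (Set.univ.pi (fun j : Fin p =>
          {u : ℝ | ∀ z : ℝ, ((u * (z - β j) : ℝ) : EReal) + g j (β j) lam ≤ g j z lam}))) :
    ∀ lam ∈ Λ, ∃! β : EuclideanSpace ℝ (Fin p), ∀ β',
      ((f β : ℝ) : EReal) + ∑ j, g j (β j) lam ≤
        ((f β' : ℝ) : EReal) + ∑ j, g j (β' j) lam :=
  stmt_11_general p r f hconv f' hf' H hH Λ g hg_bot hg_proper hg_convex hexists hPD hND
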